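/- Let A be an abelian category and let (A ← R_A) be an object of the Freyd category A(A), with structure morphism ρ_A : R_A → A. Let F : A^op → Ab be the corresponding finitely presented functor, namely the cokernel of the natural transformation Hom_A(−, R_A) → Hom_A(−, A) induced by ρ_A. Then F is left exact (preserves finite limits) if and only if the morphism of A(A) from (A ← R_A) to (coker(ρ_A) ← 0), represented by the cokernel projection ε : A → coker(ρ_A), is an isomorphism in A(A). -/

import Mathlib

open CategoryTheory Limits Opposite

set_option linter.unusedSectionVars false

universe v u

/-- An object of the Freyd category of `P`: a morphism `ρ : R ⟶ A` of `P`,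
thought of as "the object `A` with relations `R`". -/
structure FreydObj (P : Type u) [CategoryTheory.Category.{v} P] : Type max u v where
  R : P
  A : P
  ρ : R ⟶ A

namespace FreydObj

variable {P : Type u} [Category.{v} P] [Preadditive P]

/-- The "pre-Freyd" category: morphisms are morphism data admitting a witness;
the Freyd category is its quotient by the relation of having a homotopy `λ`. -/
instance : Category.{v} (FreydObj P) where
  Hom X Y := {α : X.A ⟶ Y.A // ∃ w : X.R ⟶ Y.R, X.ρ ≫ α = w ≫ Y.ρ}
  id X := ⟨𝟙 X.A, ⟨𝟙 X.R, by simp⟩⟩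
  comp {X Y Z} f g := ⟨f.1 ≫ g.1, by
    obtain ⟨w, hw⟩ := f.2
    obtain ⟨v, hv⟩ := g.2
    refine ⟨w ≫ v, ?_⟩
    rw [← Category.assoc, hw, Category.assoc, hv, Category.assoc]⟩
  id_comp f := Subtype.ext (Category.id_comp _)
  comp_id f := Subtype.ext (Category.comp_id _)
  assoc f g h := Subtype.ext (Category.assoc _ _ _)

@[simp] lemma comp_val {X Y Z : FreydObj P} (f : X ⟶ Y) (g : Y ⟶ Z) :
    (f ≫ g).1 = f.1 ≫ g.1 := rfl

@[simp] lemma id_val (X : FreydObj P) : (𝟙 X : X ⟶ X).1 = 𝟙 X.A := rfl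

instance homAdd (X Y : FreydObj P) : Add (X ⟶ Y) :=
  ⟨fun f g => ⟨f.1 + g.1, by
    obtain ⟨w, hw⟩ := f.2
    obtain ⟨v, hv⟩ := g.2
    exact ⟨w + v, by rw [Preadditive.comp_add, Preadditive.add_comp, hw, hv]⟩⟩⟩

instance homZero (X Y : FreydObj P) : Zero (X ⟶ Y) := ⟨⟨0, ⟨0, by simp⟩⟩⟩

instance homNeg (X Y : FreydObj P) : Neg (X ⟶ Y) :=
  ⟨fun f => ⟨-f.1, by
    obtain ⟨w, hw⟩ := f.2
    exact ⟨-w, by rw [Preadditive.comp_neg, Preadditive.neg_comp, hw]⟩⟩⟩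

@[simp] lemma add_val {X Y : FreydObj P} (f g : X ⟶ Y) : (f + g).1 = f.1 + g.1 := rfl
@[simp] lemma zero_val (X Y : FreydObj P) : (0 : X ⟶ Y).1 = 0 := rfl
@[simp] lemma neg_val {X Y : FreydObj P} (f : X ⟶ Y) : (-f).1 = -f.1 := rfl

instance homAddCommGroup (X Y : FreydObj P) : AddCommGroup (X ⟶ Y) where
  add_assoc f g h := Subtype.ext (add_assoc f.1 g.1 h.1)
  zero_add f := Subtype.ext (zero_add f.1)
  add_zero f := Subtype.ext (add_zero f.1)
  add_comm f g := Subtype.ext (add_comm f.1 g.1)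
  neg_add_cancel f := Subtype.ext (neg_add_cancel f.1)
  nsmul := nsmulRec
  zsmul := zsmulRec

instance : Preadditive (FreydObj P) where
  add_comp _ _ _ f f' g := Subtype.ext (by simp [Preadditive.add_comp])
  comp_add _ _ _ f g g' := Subtype.ext (by simp [Preadditive.comp_add])

end FreydObj

/-- Two morphism data are identified in the Freyd category iff their difference
factors through the relations of the target. -/
def freydRel (P : Type u) [Category.{v} P] [Preadditive P] : HomRel (FreydObj P) :=
  fun {X Y} f g => ∃ l : X.A ⟶ Y.R, l ≫ Y.ρ = f.1 - g.1

instance freydRel_congruence (P : Type u) [Category.{v} P] [Preadditive P] :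
    Congruence (freydRel P) where
  equivalence :=
    { refl := fun f => ⟨0, by simp⟩
      symm := fun {f g} h => by
        obtain ⟨l, hl⟩ := h
        exact ⟨-l, by rw [Preadditive.neg_comp, hl]; abel⟩
      trans := fun {f g h} h₁ h₂ => by
        obtain ⟨l₁, hl₁⟩ := h₁
        obtain ⟨l₂, hl₂⟩ := h₂
        exact ⟨l₁ + l₂, by rw [Preadditive.add_comp, hl₁, hl₂]; abel⟩ }
  comp_left := fun {_ _ _} f {g g'} h => by
    obtain ⟨l, hl⟩ := h
    exact ⟨f.1 ≫ l, by rw [Category.assoc, hl, Preadditive.comp_sub]; rfl⟩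
  comp_right := fun {_ _ _} {f f'} g h => by
    obtain ⟨l, hl⟩ := h
    obtain ⟨w, hw⟩ := g.2
    exact ⟨l ≫ w, by
      rw [Category.assoc, ← hw, ← Category.assoc, hl, Preadditive.sub_comp]; rfl⟩

/-- The Freyd category of an additive category `P`. -/
abbrev Freyd (P : Type u) [Category.{v} P] [Preadditive P] :=
  CategoryTheory.Quotient (freydRel P)

noncomputable instance (P : Type u) [Category.{v} P] [Preadditive P] :
    Preadditive (Freyd P) :=
  CategoryTheory.Quotient.preadditive (freydRel P) (by
    rintro X Y f₁ f₂ g₁ g₂ ⟨l₁, hl₁⟩ ⟨l₂, hl₂⟩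
    exact ⟨l₁ + l₂, by
      rw [Preadditive.add_comp, hl₁, hl₂]
      show _ = (f₁ + g₁).1 - (f₂ + g₂).1
      simp only [FreydObj.add_val]
      abel⟩)

/-- The projection functor from the pre-Freyd category to the Freyd category. -/
abbrev Freyd.Q (P : Type u) [Category.{v} P] [Preadditive P] :
    FreydObj P ⥤ Freyd P :=
  CategoryTheory.Quotient.functor (freydRel P)

/-- `P` has weak kernels. -/
def HasWeakKernels (P : Type u) [Category.{v} P] [Preadditive P] : Prop :=
  ∀ ⦃A B : P⦄ (f : A ⟶ B), ∃ (K : P) (κ : K ⟶ A), κ ≫ f = 0 ∧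
    ∀ ⦃T : P⦄ (τ : T ⟶ A), τ ≫ f = 0 → ∃ u : T ⟶ K, u ≫ κ = τ

open ZeroObject

/-!
Both conditions say that the cokernel projection `π : A ⟶ coker ρ` has a retraction `σ` modulo
`ρ`, that is `π ≫ σ - 𝟙 = l ≫ ρ` for some `l`; then also `σ ≫ π = 𝟙`, as `π` is epi.
For the Freyd category this is just invertibility of `[π]`, with inverse `[σ]`. Given such `σ` and
`l`, postcomposition with `π` exhibits `Hom(-, coker ρ)` as a cokernel of `Hom(-, ρ)`, so `F` is
representable and hence left exact. Conversely, a left exact `F` sends the kernel `π.op` of `ρ.op`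
to a kernel; the class of `𝟙` in `F(A)` dies in `F(R)`, so it is the image of a class `[σ]` in
`F(coker ρ)`, and `[π ≫ σ] = [𝟙]` is the required relation.
-/

universe w

namespace CategoryTheory

instance additive_preadditiveYoneda {C : Type u} [Category.{v} C] [Preadditive C] :
    (preadditiveYoneda : C ⥤ Cᵒᵖ ⥤ AddCommGrpCat.{v}).Additive where
  map_add {_ _ f g} := by ext; exact Preadditive.comp_add _ _ _ _ _ _

lemma Quotient.isIso_functor_map_iff {C : Type*} [Category C] (r : HomRel C) [Congruence r]
    {X Y : C} (f : X ⟶ Y) :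
    IsIso ((Quotient.functor r).map f) ↔ ∃ g : Y ⟶ X, r (f ≫ g) (𝟙 X) ∧ r (g ≫ f) (𝟙 Y) := by
  simp only [← Quotient.functor_map_eq_iff, Functor.map_comp, Functor.map_id]
  refine ⟨fun _ => ?_, fun ⟨g, hfg, hgf⟩ => ⟨_, hfg, hgf⟩⟩
  obtain ⟨g, hg⟩ := (Quotient.functor r).map_surjective (inv ((Quotient.functor r).map f))
  exact ⟨g, by simp [hg], by simp [hg]⟩

namespace Limits

def CokernelCofork.IsColimit.ofSectionOfRetractionModulo {C : Type*} [Category C] [Preadditive C]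
    {X Y Z : C} {f : X ⟶ Y} {g : Y ⟶ Z}
    (w : f ≫ g = 0) (s : Z ⟶ Y) (t : Y ⟶ X) (hsg : s ≫ g = 𝟙 Z) (htf : t ≫ f = g ≫ s - 𝟙 Y) :
    IsColimit (CokernelCofork.ofπ g w) :=
  CokernelCofork.IsColimit.ofπ _ _ (fun k _ => s ≫ k)
    (fun k hk => by
      rw [← Category.assoc, ← sub_add_cancel (g ≫ s) (𝟙 Y), ← htf, Preadditive.add_comp,
        Category.assoc, hk, comp_zero, zero_add, Category.id_comp])
    (fun k _ m hm => by rw [← hm, ← Category.assoc, hsg, Category.id_comp])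

end Limits

section

variable {C : Type*} [Category C] {G H : C ⥤ AddCommGrpCat.{w}} (α : G ⟶ H) (T : C)

lemma cokernel_π_app_surjective : Function.Surjective ((cokernel.π α).app T) := by
  rw [← AddCommGrpCat.epi_iff_surjective]
  infer_instance

lemma cokernel_π_app_eq_zero_iff (x : H.obj T) :
    (cokernel.π α).app T x = 0 ↔ ∃ y, α.app T y = x := by
  have hexact := ((ShortComplex.mk α _ (cokernel.condition α)).exact_of_g_is_cokernel
    (cokernelIsCokernel α)).map_of_epi_of_preservesCokernel ((evaluation C _).obj T)
    inferInstance inferInstance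
  refine ⟨(ShortComplex.ab_exact_iff _).mp hexact x, ?_⟩
  rintro ⟨y, rfl⟩
  simp [← ConcreteCategory.comp_apply, ← NatTrans.comp_app]

end

section

variable {C : Type u} [Category.{v} C] [Preadditive C] {R B : C} (ρ : R ⟶ B)

lemma cokernel_preadditiveYoneda_π_app_eq_zero_iff {T : C} (g : T ⟶ B) :
    (cokernel.π (preadditiveYoneda.map ρ)).app (op T) g = 0 ↔ ∃ l : T ⟶ R, l ≫ ρ = g :=
  cokernel_π_app_eq_zero_iff (preadditiveYoneda.map ρ) (op T) g

lemma cokernel_preadditiveYoneda_π_app_eq_iff {T : C} (g g' : T ⟶ B) :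
    (cokernel.π (preadditiveYoneda.map ρ)).app (op T) g =
        (cokernel.π (preadditiveYoneda.map ρ)).app (op T) g' ↔ ∃ l : T ⟶ R, l ≫ ρ = g - g' := by
  rw [← sub_eq_zero, ← cokernel_preadditiveYoneda_π_app_eq_zero_iff]
  exact iff_of_eq (congrArg (· = 0) (map_sub _ g g').symm)

lemma cokernel_preadditiveYoneda_π_app_surjective {T : C}
    (y : (cokernel (preadditiveYoneda.map ρ)).obj (op T)) :
    ∃ g : T ⟶ B, (cokernel.π (preadditiveYoneda.map ρ)).app (op T) g = y :=
  cokernel_π_app_surjective _ _ y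

lemma cokernel_preadditiveYoneda_map_π_app {T T' : C} (f : T' ⟶ T) (g : T ⟶ B) :
    (cokernel (preadditiveYoneda.map ρ)).map f.op
        ((cokernel.π (preadditiveYoneda.map ρ)).app (op T) g) =
      (cokernel.π (preadditiveYoneda.map ρ)).app (op T') (f ≫ g) :=
  ((cokernel.π (preadditiveYoneda.map ρ)).naturality_apply f.op g).symm

variable [HasCokernel ρ]

lemma comp_cokernel_π_eq_id_of_retraction_modulo {σ : cokernel ρ ⟶ B} {l : B ⟶ R}
    (hl : l ≫ ρ = cokernel.π ρ ≫ σ - 𝟙 B) : σ ≫ cokernel.π ρ = 𝟙 _ := by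
  have h : (cokernel.π ρ ≫ σ - 𝟙 B) ≫ cokernel.π ρ = 0 := by
    rw [← hl, Category.assoc, cokernel.condition, comp_zero]
  rw [Preadditive.sub_comp, sub_eq_zero, Category.id_comp, Category.assoc] at h
  rwa [← cancel_epi (cokernel.π ρ), Category.comp_id]

lemma exists_map_cokernel_π_op_eq [HasZeroObject C] (G : Cᵒᵖ ⥤ AddCommGrpCat.{w})
    [PreservesFiniteLimits G] {x : G.obj (op B)} (hx : G.map ρ.op x = 0) :
    ∃ y, G.map (cokernel.π ρ).op y = x := by
  have hker : IsLimit (KernelFork.ofι (cokernel.π ρ).op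
      (by rw [← op_comp, cokernel.condition, op_zero] : (cokernel.π ρ).op ≫ ρ.op = 0)) :=
    CokernelCofork.IsColimit.ofπOp _ (cokernel.condition ρ) (cokernelIsCokernel ρ)
  have hexact := ShortComplex.exact_of_f_is_kernel
    (ShortComplex.mk (G.map (cokernel.π ρ).op) (G.map ρ.op)
      (by rw [← G.map_comp, ← op_comp, cokernel.condition, op_zero, G.map_zero]))
    (KernelFork.mapIsLimit _ hker G)
  exact (ShortComplex.ab_exact_iff _).mp hexact x hx

lemma exists_retraction_modulo_of_preservesFiniteLimits [HasZeroObject C]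
    [PreservesFiniteLimits (cokernel (preadditiveYoneda.map ρ))] :
    ∃ (σ : cokernel ρ ⟶ B) (l : B ⟶ R), l ≫ ρ = cokernel.π ρ ≫ σ - 𝟙 B := by
  have hρ : (cokernel (preadditiveYoneda.map ρ)).map ρ.op
      ((cokernel.π (preadditiveYoneda.map ρ)).app (op B) (𝟙 B)) = 0 := by
    rw [cokernel_preadditiveYoneda_map_π_app, Category.comp_id,
      cokernel_preadditiveYoneda_π_app_eq_zero_iff]
    exact ⟨𝟙 R, Category.id_comp ρ⟩
  obtain ⟨y, hy⟩ := exists_map_cokernel_π_op_eq ρ _ hρ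
  obtain ⟨σ, rfl⟩ := cokernel_preadditiveYoneda_π_app_surjective ρ y
  rw [cokernel_preadditiveYoneda_map_π_app, cokernel_preadditiveYoneda_π_app_eq_iff] at hy
  exact ⟨σ, hy⟩

lemma preservesFiniteLimits_cokernel_preadditiveYoneda_of_retraction_modulo
    {σ : cokernel ρ ⟶ B} {l : B ⟶ R} (hl : l ≫ ρ = cokernel.π ρ ≫ σ - 𝟙 B) :
    PreservesFiniteLimits (cokernel (preadditiveYoneda.map ρ)) := by
  have hπ : preadditiveYoneda.map ρ ≫ preadditiveYoneda.map (cokernel.π ρ) = 0 := by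
    rw [← Functor.map_comp, cokernel.condition, Functor.map_zero]
  have hcoker := CokernelCofork.IsColimit.ofSectionOfRetractionModulo hπ
    (preadditiveYoneda.map σ) (preadditiveYoneda.map l)
    (by rw [← Functor.map_comp, comp_cokernel_π_eq_id_of_retraction_modulo ρ hl, Functor.map_id])
    (by rw [← Functor.map_comp, hl, Functor.map_sub, Functor.map_comp, Functor.map_id])
  let e : cokernel (preadditiveYoneda.map ρ) ≅ preadditiveYoneda.obj (cokernel ρ) :=
    (cokernelIsCokernel _).coconePointUniqueUpToIso hcoker
  exact preservesFiniteLimits_of_natIso e.symm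

lemma nonempty_preservesFiniteLimits_cokernel_preadditiveYoneda_iff [HasZeroObject C] :
    Nonempty (PreservesFiniteLimits (cokernel (preadditiveYoneda.map ρ))) ↔
      ∃ (σ : cokernel ρ ⟶ B) (l : B ⟶ R), l ≫ ρ = cokernel.π ρ ≫ σ - 𝟙 B :=
  ⟨fun ⟨_⟩ => exists_retraction_modulo_of_preservesFiniteLimits ρ,
    fun ⟨_, _, hl⟩ =>
      ⟨preservesFiniteLimits_cokernel_preadditiveYoneda_of_retraction_modulo ρ hl⟩⟩

end

end CategoryTheory

lemma Freyd.isIso_map_cokernel_π_iff {P : Type u} [Category.{v} P] [Preadditive P]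
    [HasZeroObject P] (X : FreydObj P) [HasCokernel X.ρ] :
    IsIso ((Freyd.Q P).map (X := X) (Y := ⟨0, cokernel X.ρ, 0⟩)
        ⟨cokernel.π X.ρ, ⟨0, by simp⟩⟩) ↔
      ∃ (σ : cokernel X.ρ ⟶ X.A) (l : X.A ⟶ X.R), l ≫ X.ρ = cokernel.π X.ρ ≫ σ - 𝟙 X.A := by
  rw [Quotient.isIso_functor_map_iff]
  constructor
  · rintro ⟨σ, ⟨l, hl⟩, -⟩
    exact ⟨σ.1, l, hl⟩
  · rintro ⟨σ, l, hl⟩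
    refine ⟨⟨σ, 0, by simp⟩, ⟨l, hl⟩, ⟨0, ?_⟩⟩
    rw [zero_comp, eq_comm, sub_eq_zero]
    exact comp_cokernel_π_eq_id_of_retraction_modulo X.ρ hl

/-- let `A` be abelian and `(A ← R_A)` an object of `A(A)`, with
corresponding finitely presented functor `F = coker(Hom(−,R_A) → Hom(−,A))`.  Then `F`
is left exact if and only if the morphism `(A ← R_A) ⟶ (coker ρ_A ← 0)` of the Freyd
category represented by the cokernel projection is an isomorphism. -/
theorem fp_functor_leftExact_iff (A : Type u) [Category.{v} A] [Abelian A]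
    (X : FreydObj A) :
    Nonempty (PreservesFiniteLimits (cokernel (preadditiveYoneda.map X.ρ))) ↔
      IsIso ((Freyd.Q A).map (X := X) (Y := ⟨0, cokernel X.ρ, 0⟩)
        ⟨cokernel.π X.ρ, ⟨0, by simp⟩⟩) := by
  rw [nonempty_preservesFiniteLimits_cokernel_preadditiveYoneda_iff,
    Freyd.isIso_map_cokernel_π_iff]
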